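/- arXiv:1707.08742 — 2 statements merged into one kernel-verified Lean document; each statement's English description precedes it below -/
import Mathlib

section
/- (Agreement with Kripke semantics on the standard fragment) If an InqML formula φ contains neither the inquisitive disjunction ⩾ nor the modality ⊞, then for every inquisitive modal model M = ⟨W,Σ,V⟩ and every world w ∈ W: M,w ⊨ φ iff K(M),w ⊨ φ in standard Kripke semantics, where K(M) is the Kripke model with worlds W, valuation V, and accessibility map σ(w) = ⋃Σ(w). -/
/-- Formulas of inquisitive modal logic InqML over atomic propositions `P`. -/
inductive InqForm (P : Type) : Type
  | atom : P → InqForm P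
  | bot : InqForm P
  | and : InqForm P → InqForm P → InqForm P
  | impl : InqForm P → InqForm P → InqForm P
  | idisj : InqForm P → InqForm P → InqForm P
  | box : InqForm P → InqForm P
  | boxplus : InqForm P → InqForm P

/-- An inquisitive modal model `M = ⟨W, Σ, V⟩`. -/
structure InqModel (P : Type) where
  W : Type
  Sig : W → Set (Set W)
  Sig_nonempty : ∀ w, (Sig w).Nonempty
  Sig_downward : ∀ w, ∀ s ∈ Sig w, ∀ t ⊆ s, t ∈ Sig w
  V : P → Set W

/-- `σ(w) = ⋃ Σ(w)`. -/
def InqModel.sigma {P : Type} (M : InqModel P) (w : M.W) : Set M.W :=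
  ⋃₀ M.Sig w

/-- Support of a formula at an information state `s ⊆ W`. -/
def support {P : Type} (M : InqModel P) : InqForm P → Set M.W → Prop
  | .atom p, s => s ⊆ M.V p
  | .bot, s => s = ∅
  | .and φ ψ, s => support M φ s ∧ support M ψ s
  | .impl φ ψ, s => ∀ t ⊆ s, support M φ t → support M ψ t
  | .idisj φ ψ, s => support M φ s ∨ support M ψ s
  | .box φ, s => ∀ w ∈ s, support M φ (M.sigma w)
  | .boxplus φ, s => ∀ w ∈ s, ∀ t ∈ M.Sig w, support M φ t

/-- Truth at a world: `M,w ⊨ φ` iff `M,{w} ⊨ φ`. -/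
def truth {P : Type} (M : InqModel P) (w : M.W) (φ : InqForm P) : Prop :=
  support M φ {w}

/-- `φ` is a standard modal formula: it contains neither `⩾` nor `⊞`. -/
def Standard {P : Type} : InqForm P → Prop
  | .atom _ => True
  | .bot => True
  | .and φ ψ => Standard φ ∧ Standard ψ
  | .impl φ ψ => Standard φ ∧ Standard ψ
  | .idisj _ _ => False
  | .box φ => Standard φ
  | .boxplus _ => False

/-- Standard Kripke semantics on the Kripke model `⟨W, σ, V⟩`. -/
def ksat {P W : Type} (σ : W → Set W) (V : P → Set W) : InqForm P → W → Prop
  | .atom p, w => w ∈ V p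
  | .bot, _ => False
  | .and φ ψ, w => ksat σ V φ w ∧ ksat σ V ψ w
  | .impl φ ψ, w => ksat σ V φ w → ksat σ V ψ w
  | .idisj φ ψ, w => ksat σ V φ w ∨ ksat σ V ψ w
  | .box φ, w => ∀ v ∈ σ w, ksat σ V φ v
  | .boxplus φ, w => ∀ v ∈ σ w, ksat σ V φ v

theorem standard_support_iff {P : Type} (M : InqModel P) :
    ∀ (φ : InqForm P), Standard φ → ∀ s : Set M.W,
      (support M φ s ↔ ∀ w ∈ s, ksat M.sigma M.V φ w) := by
  intro φ
  induction φ with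
  | atom p => intro _ s; simp [support, ksat, Set.subset_def]
  | bot => intro _ s; simp [support, ksat, Set.eq_empty_iff_forall_notMem]
  | and φ ψ ihφ ihψ =>
    intro h s
    simp only [support, ksat, ihφ h.1, ihψ h.2]
    constructor
    · rintro ⟨h1, h2⟩ w hw; exact ⟨h1 w hw, h2 w hw⟩
    · intro h; exact ⟨fun w hw => (h w hw).1, fun w hw => (h w hw).2⟩
  | impl φ ψ ihφ ihψ =>
    intro h s
    simp only [support, ksat]
    constructor
    · intro hs w hw hk
      have := hs {w} (by simpa using hw)
        ((ihφ h.1 {w}).2 (by simpa using hk))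
      simpa using (ihψ h.2 {w}).1 this w rfl
    · intro hs t ht hφt
      exact (ihψ h.2 t).2 fun w hw => hs w (ht hw) ((ihφ h.1 t).1 hφt w hw)
  | idisj φ ψ _ _ => intro h; exact absurd h id
  | box φ ih =>
    intro h s
    simp only [support, ksat]
    exact ⟨fun hs w hw => (ih h _).1 (hs w hw),
      fun hs w hw => (ih h _).2 (hs w hw)⟩
  | boxplus φ _ => intro h; exact absurd h id

/-- **Agreement with Kripke semantics on the standard fragment**: if `φ` contains
neither `⩾` nor `⊞`, then truth of `φ` in an inquisitive modal model `M` coincides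
with standard Kripke truth in the associated Kripke model `K(M) = ⟨W, σ, V⟩`. -/
theorem standard_fragment_kripke {P : Type} (φ : InqForm P) (hφ : Standard φ)
    (M : InqModel P) (w : M.W) :
    truth M w φ ↔ ksat M.sigma M.V φ w := by
  rw [truth, standard_support_iff M φ hφ]
  simp
end

section
/- (Invariance of InqML under bisimilarity) For all inquisitive modal models M, M' with information states s, s' and every InqML formula φ: if M,s ~ M',s' then M,s ⊨ φ iff M',s' ⊨ φ. -/
/-- Modal depth: maximal nesting depth of `□` and `⊞`. -/
def mdepth {P : Type} : InqForm P → ℕ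
  | .atom _ => 0
  | .bot => 0
  | .and φ ψ => max (mdepth φ) (mdepth ψ)
  | .impl φ ψ => max (mdepth φ) (mdepth ψ)
  | .idisj φ ψ => max (mdepth φ) (mdepth ψ)
  | .box φ => mdepth φ + 1
  | .boxplus φ => mdepth φ + 1

/-- Lift of a relation between worlds to sets of worlds: every world on either
side is related to some world on the other side. -/
def StateRel {W W' : Type} (Z : W → W' → Prop) (s : Set W) (s' : Set W') : Prop :=
  (∀ w ∈ s, ∃ w' ∈ s', Z w w') ∧ (∀ w' ∈ s', ∃ w ∈ s, Z w w')

/-- `n`-bisimilarity between worlds of two inquisitive modal models. -/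
def NBisimW {P : Type} (M M' : InqModel P) : ℕ → M.W → M'.W → Prop
  | 0, w, w' => ∀ p : P, w ∈ M.V p ↔ w' ∈ M'.V p
  | n + 1, w, w' => (∀ p : P, w ∈ M.V p ↔ w' ∈ M'.V p) ∧
      (∀ s ∈ M.Sig w, ∃ s' ∈ M'.Sig w', StateRel (NBisimW M M' n) s s') ∧
      (∀ s' ∈ M'.Sig w', ∃ s ∈ M.Sig w, StateRel (NBisimW M M' n) s s')

/-- `n`-bisimilarity between information states. -/
def NBisimS {P : Type} (M M' : InqModel P) (n : ℕ) (s : Set M.W) (s' : Set M'.W) : Prop :=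
  StateRel (NBisimW M M' n) s s'

/-- `Z` is a bisimulation between two inquisitive modal models. -/
def IsBisimulation {P : Type} (M M' : InqModel P) (Z : M.W → M'.W → Prop) : Prop :=
  ∀ w w', Z w w' →
    (∀ p : P, w ∈ M.V p ↔ w' ∈ M'.V p) ∧
    (∀ s ∈ M.Sig w, ∃ s' ∈ M'.Sig w', StateRel Z s s') ∧
    (∀ s' ∈ M'.Sig w', ∃ s ∈ M.Sig w, StateRel Z s s')

/-- Bisimilarity of worlds: inclusion in some bisimulation. -/
def BisimW {P : Type} (M M' : InqModel P) (w : M.W) (w' : M'.W) : Prop :=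
  ∃ Z, IsBisimulation M M' Z ∧ Z w w'

/-- Bisimilarity of information states. -/
def BisimS {P : Type} (M M' : InqModel P) (s : Set M.W) (s' : Set M'.W) : Prop :=
  StateRel (BisimW M M') s s'

lemma isBisim_flip {P : Type} {M M' : InqModel P} {Z : M.W → M'.W → Prop}
    (hZ : IsBisimulation M M' Z) : IsBisimulation M' M (fun w' w => Z w w') := by
  intro w' w hww
  obtain ⟨h1, h2, h3⟩ := hZ w w' hww
  refine ⟨fun p => (h1 p).symm, ?_, ?_⟩
  · intro t' ht'
    obtain ⟨t, ht, hr⟩ := h3 t' ht'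
    exact ⟨t, ht, hr.2, hr.1⟩
  · intro t ht
    obtain ⟨t', ht', hr⟩ := h2 t ht
    exact ⟨t', ht', hr.2, hr.1⟩

lemma bisimW_symm {P : Type} {M M' : InqModel P} {w : M.W} {w' : M'.W}
    (h : BisimW M M' w w') : BisimW M' M w' w := by
  obtain ⟨Z, hZ, hw⟩ := h
  exact ⟨_, isBisim_flip hZ, hw⟩

lemma bisimS_symm {P : Type} {M M' : InqModel P} {s : Set M.W} {s' : Set M'.W}
    (h : BisimS M M' s s') : BisimS M' M s' s := by
  refine ⟨fun w' hw' => ?_, fun w hw => ?_⟩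
  · obtain ⟨w, hw, hb⟩ := h.2 w' hw'
    exact ⟨w, hw, bisimW_symm hb⟩
  · obtain ⟨w', hw', hb⟩ := h.1 w hw
    exact ⟨w', hw', bisimW_symm hb⟩

lemma stateRel_bisimS {P : Type} {M M' : InqModel P} {Z : M.W → M'.W → Prop}
    (hZ : IsBisimulation M M' Z) {s : Set M.W} {s' : Set M'.W}
    (h : StateRel Z s s') : BisimS M M' s s' := by
  refine ⟨fun w hw => ?_, fun w' hw' => ?_⟩
  · obtain ⟨w', hw', hww⟩ := h.1 w hw
    exact ⟨w', hw', Z, hZ, hww⟩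
  · obtain ⟨w, hw, hww⟩ := h.2 w' hw'
    exact ⟨w, hw, Z, hZ, hww⟩

lemma bisimW_sigma {P : Type} {M M' : InqModel P} {w : M.W} {w' : M'.W}
    (h : BisimW M M' w w') : BisimS M M' (M.sigma w) (M'.sigma w') := by
  obtain ⟨Z, hZ, hww⟩ := h
  obtain ⟨_, h2, h3⟩ := hZ w w' hww
  refine ⟨fun u hu => ?_, fun u' hu' => ?_⟩
  · obtain ⟨t, ht, hut⟩ := hu
    obtain ⟨t', ht', hr⟩ := h2 t ht
    obtain ⟨u', hu', huu⟩ := hr.1 u hut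
    exact ⟨u', ⟨t', ht', hu'⟩, Z, hZ, huu⟩
  · obtain ⟨t', ht', hut⟩ := hu'
    obtain ⟨t, ht, hr⟩ := h3 t' ht'
    obtain ⟨u, hu, huu⟩ := hr.2 u' hut
    exact ⟨u, ⟨t, ht, hu⟩, Z, hZ, huu⟩

lemma support_of_bisimS {P : Type} (φ : InqForm P) :
    ∀ (M M' : InqModel P) (s : Set M.W) (s' : Set M'.W),
      BisimS M M' s s' → support M φ s → support M' φ s' := by
  induction φ with
  | atom p =>
    intro M M' s s' h hs w' hw'
    obtain ⟨w, hw, Z, hZ, hww⟩ := h.2 w' hw'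
    exact ((hZ w w' hww).1 p).mp (hs hw)
  | bot =>
    intro M M' s s' h hs
    subst hs
    ext w'
    simp only [Set.mem_empty_iff_false, iff_false]
    intro hw'
    obtain ⟨w, hw, _⟩ := h.2 w' hw'
    exact hw
  | and φ ψ ihφ ihψ =>
    intro M M' s s' h hs
    exact ⟨ihφ M M' s s' h hs.1, ihψ M M' s s' h hs.2⟩
  | impl φ ψ ihφ ihψ =>
    intro M M' s s' h hs t' ht' hφt'
    set t : Set M.W := {w | w ∈ s ∧ ∃ w' ∈ t', BisimW M M' w w'} with htdef
    have hts : BisimS M M' t t' := by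
      refine ⟨fun w hw => hw.2, fun w' hw' => ?_⟩
      obtain ⟨w, hw, hb⟩ := h.2 w' (ht' hw')
      exact ⟨w, ⟨hw, w', hw', hb⟩, hb⟩
    have hφt : support M φ t := ihφ M' M t' t (bisimS_symm hts) hφt'
    exact ihψ M M' t t' hts (hs t (fun w hw => hw.1) hφt)
  | idisj φ ψ ihφ ihψ =>
    intro M M' s s' h hs
    exact hs.imp (ihφ M M' s s' h) (ihψ M M' s s' h)
  | box φ ihφ =>
    intro M M' s s' h hs w' hw'
    obtain ⟨w, hw, hb⟩ := h.2 w' hw'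
    exact ihφ M M' _ _ (bisimW_sigma hb) (hs w hw)
  | boxplus φ ihφ =>
    intro M M' s s' h hs w' hw' t' ht'
    obtain ⟨w, hw, Z, hZ, hww⟩ := h.2 w' hw'
    obtain ⟨t, ht, hr⟩ := (hZ w w' hww).2.2 t' ht'
    exact ihφ M M' t t' (stateRel_bisimS hZ hr) (hs w hw t ht)

/-- **Invariance of InqML under bisimilarity**. -/
theorem invariance_under_bisim {P : Type} (M M' : InqModel P)
    (s : Set M.W) (s' : Set M'.W) (φ : InqForm P) (h : BisimS M M' s s') :
    support M φ s ↔ support M' φ s' :=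
  ⟨support_of_bisimS φ M M' s s' h, support_of_bisimS φ M' M s' s (bisimS_symm h)⟩
end
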